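/- For every integer j ≥ 2, the fraction of gaps of odd length 2j+1 converges: lim_{n→∞} N_n(2j+1)/T_n = (3/4)·2^{−j}. -/

import Mathlib

open scoped Classical
open Filter

/-- The Kentucky-2 sequence: `a 1 = 1`, `a 2 = 2`, `a 3 = 3`, `a 4 = 4`, and
`a (n+4) = a (n+2) + 2 * a n` for all `n ≥ 1`. -/
def kent : ℕ → ℕ
  | 0 => 0
  | 1 => 1
  | 2 => 2
  | 3 => 3
  | 4 => 4
  | n + 5 => kent (n + 3) + 2 * kent (n + 1)


lemma kent_rec (n : ℕ) : kent (n+5) = kent (n+3) + 2 * kent (n+1) := rfl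

lemma kent_even (n : ℕ) (h : 1 ≤ n) : kent (2*n) = 2^n := by
  induction n using Nat.strong_induction_on with
  | _ n ih =>
    match n, h with
    | 1, _ => rfl
    | 2, _ => rfl
    | (n+3), _ =>
      have h1 : 2*(n+3) = (2*n+1) + 5 := by ring
      rw [h1, kent_rec]
      have e1 : 2*n+1+3 = 2*(n+2) := by ring
      have e2 : 2*n+1+1 = 2*(n+1) := by ring
      rw [e1, e2, ih (n+2) (by omega) (by omega), ih (n+1) (by omega) (by omega)]
      ring

lemma kent_odd (n : ℕ) : (3:ℤ) * kent (2*n+1) = 2^(n+2) - (-1)^n := by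
  induction n using Nat.strong_induction_on with
  | _ n ih =>
    match n with
    | 0 => decide
    | 1 => decide
    | (n+2) =>
      have h1 : 2*(n+2)+1 = (2*n) + 5 := by ring
      rw [h1, kent_rec]
      have e1 : 2*n+3 = 2*(n+1)+1 := by ring
      push_cast
      rw [e1]
      have i1 := ih (n+1) (by omega)
      have i2 := ih n (by omega)
      push_cast at i1 i2
      linear_combination i1 + 2*i2

lemma kent_cast_even (n : ℕ) (h : 1 ≤ n) : (kent (2*n) : ℤ) = 2^n := by
  rw [kent_even n h]; push_cast; ring

lemma kent_lt (n : ℕ) (h : 1 ≤ n) : kent n < kent (n+1) := by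
  induction n using Nat.strong_induction_on with
  | _ n ih =>
    match n, h with
    | 1, _ => decide
    | 2, _ => decide
    | 3, _ => decide
    | 4, _ => decide
    | (n+5), _ =>
      have e : n+5+1 = (n+1)+5 := by ring
      rw [e, kent_rec, kent_rec, show n+1+3 = n+4 from by ring,
        show n+1+1 = n+2 from by ring]
      have h1 : kent (n+3) < kent (n+4) := ih (n+3) (by omega) (by omega)
      have h2 : kent (n+1) < kent (n+2) := ih (n+1) (by omega) (by omega)
      omega

lemma kent_mono {m n : ℕ} (h1 : 1 ≤ m) (h : m ≤ n) : kent m ≤ kent n := by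
  induction n with
  | zero => omega
  | succ k ih =>
    rcases Nat.lt_or_ge m (k+1) with h' | h'
    · exact le_trans (ih (by omega)) (le_of_lt (kent_lt k (by omega)))
    · have : m = k+1 := by omega
      rw [this]

lemma kent_strict_mono {m n : ℕ} (h1 : 1 ≤ m) (h : m < n) : kent m < kent n :=
  lt_of_lt_of_le (kent_lt m h1) (kent_mono (by omega) h)

lemma kent_pos (n : ℕ) (h : 1 ≤ n) : 1 ≤ kent n := kent_mono le_rfl h

-- identity B : kent (2n+4) = kent (2n+3) + kent (2n+1)
lemma kent_idB (n : ℕ) : kent (2*n+4) = kent (2*n+3) + kent (2*n+1) := by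
  have h1 := kent_odd (n+1)
  have h2 := kent_odd n
  have h3 := kent_cast_even (n+2) (by omega)
  rw [show 2*(n+1)+1 = 2*n+3 from by ring] at h1
  rw [show 2*(n+2) = 2*n+4 from by ring] at h3
  have key : (3:ℤ) * kent (2*n+4) = 3 * (kent (2*n+3) + kent (2*n+1)) := by
    rw [h3, mul_add, h1, h2]; ring
  have := mul_left_cancel₀ (by norm_num : (3:ℤ) ≠ 0) key
  exact_mod_cast this

-- identity A : kent (2n+5) = kent (2n+4) + kent (2n+1)
lemma kent_idA (n : ℕ) : kent (2*n+5) = kent (2*n+4) + kent (2*n+1) := by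
  have h := kent_rec (2*n)
  have h2 := kent_idB n
  omega
/-- A finite set `S` of positive integers is Kentucky-2 legal if for all distinct
`i, j ∈ S` we have `|⌈i/2⌉ - ⌈j/2⌉| ≥ 2`. -/
def KLegal (S : Finset ℕ) : Prop :=
  (∀ i ∈ S, 1 ≤ i) ∧
  ∀ i ∈ S, ∀ j ∈ S, i ≠ j → 2 ≤ |(((i + 1) / 2 : ℕ) : ℤ) - (((j + 1) / 2 : ℕ) : ℤ)|


lemma abs_pair (a b : ℕ) : 2 ≤ |(a:ℤ) - (b:ℤ)| ↔ a + 2 ≤ b ∨ b + 2 ≤ a := by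
  rw [le_abs]; push_cast; omega

lemma klegal_iff (S : Finset ℕ) : KLegal S ↔
    (∀ i ∈ S, 1 ≤ i) ∧
    ∀ i ∈ S, ∀ j ∈ S, i ≠ j → (i+1)/2 + 2 ≤ (j+1)/2 ∨ (j+1)/2 + 2 ≤ (i+1)/2 := by
  unfold KLegal
  constructor
  · rintro ⟨h1, h2⟩
    exact ⟨h1, fun i hi j hj hij => (abs_pair _ _).1 (h2 i hi j hj hij)⟩
  · rintro ⟨h1, h2⟩
    exact ⟨h1, fun i hi j hj hij => (abs_pair _ _).2 (h2 i hi j hj hij)⟩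

lemma klegal_empty : KLegal ∅ := ⟨by simp, by simp⟩

lemma klegal_erase {S : Finset ℕ} (h : KLegal S) (i : ℕ) : KLegal (S.erase i) := by
  obtain ⟨h1, h2⟩ := h
  exact ⟨fun j hj => h1 j (Finset.mem_of_mem_erase hj),
    fun a ha b hb hab => h2 a (Finset.mem_of_mem_erase ha) b (Finset.mem_of_mem_erase hb) hab⟩

lemma klegal_insert {S : Finset ℕ} {i : ℕ} (hS : KLegal S) (hi : 1 ≤ i)
    (h : ∀ j ∈ S, (j+1)/2 + 2 ≤ (i+1)/2) : KLegal (insert i S) := by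
  rw [klegal_iff] at hS ⊢
  obtain ⟨h1, h2⟩ := hS
  constructor
  · intro a ha
    rcases Finset.mem_insert.1 ha with rfl | ha'
    · exact hi
    · exact h1 a ha'
  · intro a ha b hb hab
    rcases Finset.mem_insert.1 ha with rfl | ha' <;> rcases Finset.mem_insert.1 hb with rfl | hb'
    · omega
    · right; exact h b hb'
    · left; exact h a ha'
    · exact h2 a ha' b hb' hab

lemma insert_not_mem {S : Finset ℕ} {i : ℕ} (h : ∀ j ∈ S, (j+1)/2 + 2 ≤ (i+1)/2) : i ∉ S := by
  intro hi
  have := h i hi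
  omega

-- peeling the max
lemma max_peel {S : Finset ℕ} (h : KLegal S) (hne : S.Nonempty) :
    ∀ j ∈ S.erase (S.max' hne), (j+1)/2 + 2 ≤ ((S.max' hne)+1)/2 := by
  intro j hj
  have hjS := Finset.mem_of_mem_erase hj
  have hjne := Finset.ne_of_mem_erase hj
  have hle : j ≤ S.max' hne := Finset.le_max' S j hjS
  have h2 := ((klegal_iff S).1 h).2 j hjS (S.max' hne) (Finset.max'_mem S hne) hjne
  omega

lemma sum_le_bound (n : ℕ) : ∀ S : Finset ℕ, KLegal S → (∀ i ∈ S, i ≤ 2*n) →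
    (∑ i ∈ S, kent i) + 1 ≤ kent (2*n+1) := by
  induction n using Nat.strong_induction_on with
  | _ n ih =>
    intro S hS hbound
    rcases S.eq_empty_or_nonempty with rfl | hne
    · simp [kent_pos (2*n+1) (by omega)]
    · set i := S.max' hne with hidef
      have hiS : i ∈ S := S.max'_mem hne
      have hi1 : 1 ≤ i := hS.1 i hiS
      have hile : i ≤ 2*n := hbound i hiS
      have hn1 : 1 ≤ n := by omega
      rcases Nat.lt_or_ge i (2*n - 1) with hlt | hge
      · -- i ≤ 2(n-1), use IH at n-1
        have h' : ∀ j ∈ S, j ≤ 2*(n-1) := by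
          intro j hj
          have := S.le_max' j hj
          omega
        have := ih (n-1) (by omega) S hS h'
        have hmono : kent (2*(n-1)+1) ≤ kent (2*n+1) := kent_mono (by omega) (by omega)
        omega
      · -- i = 2n-1 or 2n
        have hbin : (i+1)/2 = n := by omega
        have hpeel := max_peel hS hne
        rw [← hidef] at hpeel
        have herase : ∀ j ∈ S.erase i, j ≤ 2*(n-2) := by
          intro j hj
          have := hpeel j hj
          omega
        have hSe : KLegal (S.erase i) := klegal_erase hS i
        have hkerase : (∑ j ∈ S.erase i, kent j) + 1 ≤ kent (2*(n-2)+1) := by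
          rcases Nat.lt_or_ge n 2 with h2 | h2
          · -- n = 1 : erase is empty
            have : S.erase i = ∅ := by
              rw [Finset.eq_empty_iff_forall_notMem]
              intro j hj
              have := hSe.1 j hj
              have := herase j hj
              omega
            rw [this]
            simp [kent_pos (2*(n-2)+1) (by omega)]
          · exact ih (n-2) (by omega) _ hSe herase
        have hsum : ∑ j ∈ S, kent j = kent i + ∑ j ∈ S.erase i, kent j := by
          rw [← Finset.sum_erase_add S _ hiS]; ring
        have hki : kent i ≤ kent (2*n) := kent_mono hi1 (by omega)
        have hid : kent (2*n+1) = kent (2*n) + kent (2*(n-2)+1) := by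
          rcases Nat.lt_or_ge n 2 with h2 | h2
          · interval_cases n
            · decide
          · have := kent_idA (n-2)
            rw [show 2*(n-2)+5 = 2*n+1 from by omega, show 2*(n-2)+4 = 2*n from by omega] at this
            exact this
        omega

lemma exists_rep (n : ℕ) : ∀ m, m + 1 ≤ kent (2*n+1) →
    ∃ S : Finset ℕ, KLegal S ∧ (∀ i ∈ S, i ≤ 2*n) ∧ ∑ i ∈ S, kent i = m := by
  induction n using Nat.strong_induction_on with
  | _ n ih =>
    intro m hm
    rcases Nat.eq_zero_or_pos m with rfl | hmpos
    · exact ⟨∅, klegal_empty, by simp, by simp⟩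
    rcases Nat.eq_zero_or_pos n with rfl | hnpos
    · simp only [show 2*0+1 = 1 from rfl] at hm
      have : kent 1 = 1 := rfl
      omega
    rcases Nat.lt_or_ge n 2 with hn1 | hn2
    · -- n = 1, m ∈ {1, 2}
      have hn : n = 1 := by omega
      subst hn
      have h3 : kent (2*1+1) = 3 := rfl
      have hub : m ≤ 2 := by omega
      interval_cases m
      · exact ⟨{1}, ⟨by simp, by simp⟩, by simp, by simp [show kent 1 = 1 from rfl]⟩
      · exact ⟨{2}, ⟨by simp, by simp⟩, by simp, by simp [show kent 2 = 2 from rfl]⟩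
    -- n ≥ 2
    rcases Nat.lt_or_ge m (kent (2*(n-1)+1)) with hlow | hhigh
    · obtain ⟨S, h1, h2, h3⟩ := ih (n-1) (by omega) m (by omega)
      exact ⟨S, h1, fun i hi => by have := h2 i hi; omega, h3⟩
    -- kent (2n-1) ≤ m
    have hidB := kent_idB (n-2)
    have hidA := kent_idA (n-2)
    rw [show 2*(n-2)+4 = 2*n from by omega, show 2*(n-2)+3 = 2*n-1 from by omega] at hidB
    rw [show 2*(n-2)+5 = 2*n+1 from by omega, show 2*(n-2)+4 = 2*n from by omega] at hidA
    have hstep : ∀ t r, (t = 2*n-1 ∨ t = 2*n) → r + 1 ≤ kent (2*(n-2)+1) →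
        ∃ S : Finset ℕ, KLegal S ∧ (∀ i ∈ S, i ≤ 2*n) ∧ ∑ i ∈ S, kent i = kent t + r := by
      intro t r ht hr
      obtain ⟨S', hl', hb', hs'⟩ := ih (n-2) (by omega) r hr
      have hbinle : ∀ j ∈ S', (j+1)/2 + 2 ≤ (t+1)/2 := by
        intro j hj
        have := hb' j hj
        have := hl'.1 j hj
        omega
      refine ⟨insert t S', klegal_insert hl' (by omega) hbinle, ?_, ?_⟩
      · intro i hi
        rcases Finset.mem_insert.1 hi with rfl | hi'
        · omega
        · have := hb' i hi'; omega
      · rw [Finset.sum_insert (insert_not_mem hbinle), hs']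
    rcases Nat.lt_or_ge m (kent (2*n)) with hmid | htop
    · -- use t = 2n-1
      rw [show 2*(n-1)+1 = 2*n-1 from by omega] at hhigh
      obtain ⟨S, h1, h2, h3⟩ := hstep (2*n-1) (m - kent (2*n-1)) (Or.inl rfl) (by omega)
      exact ⟨S, h1, h2, by omega⟩
    · obtain ⟨S, h1, h2, h3⟩ := hstep (2*n) (m - kent (2*n)) (Or.inr rfl) (by omega)
      exact ⟨S, h1, h2, by omega⟩

lemma sum_lower {S : Finset ℕ} (hS : KLegal S) (hne : S.Nonempty) :
    kent (S.max' hne) ≤ ∑ i ∈ S, kent i := by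
  have := Finset.sum_erase_add S kent (S.max'_mem hne)
  omega

lemma erase_bound {S : Finset ℕ} (hS : KLegal S) (hne : S.Nonempty) {b : ℕ}
    (hb : (S.max' hne + 1)/2 = b) :
    (∑ x ∈ S.erase (S.max' hne), kent x) + 1 ≤ kent (2*(b-2)+1) := by
  apply sum_le_bound _ _ (klegal_erase hS _)
  intro x hx
  have h1 := max_peel hS hne x hx
  have h2 := hS.1 x (Finset.mem_of_mem_erase hx)
  omega

lemma max_odd_bound {S : Finset ℕ} (hS : KLegal S) (hne : S.Nonempty) {b : ℕ} (hb : 1 ≤ b)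
    (hmax : S.max' hne = 2*b - 1) : (∑ x ∈ S, kent x) + 1 ≤ kent (2*b) := by
  have he := erase_bound hS hne (b := b) (by omega)
  have hsum := Finset.sum_erase_add S kent (S.max'_mem hne)
  have hid : kent (2*b-1) + kent (2*(b-2)+1) ≤ kent (2*b) := by
    rcases Nat.lt_or_ge b 2 with h2 | h2
    · have : b = 1 := by omega
      subst this
      decide
    · have := kent_idB (b-2)
      rw [show 2*(b-2)+4 = 2*b from by omega, show 2*(b-2)+3 = 2*b-1 from by omega] at this
      omega
  have hk : kent (S.max' hne) = kent (2*b-1) := by rw [hmax]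
  omega

lemma unique_rep : ∀ m : ℕ, ∀ S S' : Finset ℕ, KLegal S → KLegal S' →
    (∑ i ∈ S, kent i) = m → (∑ i ∈ S', kent i) = m → S = S' := by
  intro m
  induction m using Nat.strong_induction_on with
  | _ m ih =>
    intro S S' hS hS' hsum hsum'
    rcases Nat.eq_zero_or_pos m with rfl | hmpos
    · have he : ∀ T : Finset ℕ, KLegal T → (∑ i ∈ T, kent i) = 0 → T = ∅ := by
        intro T hT h0
        rcases T.eq_empty_or_nonempty with rfl | hne
        · rfl
        · have := sum_lower hT hne
          have := kent_pos (T.max' hne) (hT.1 _ (T.max'_mem hne))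
          omega
      rw [he S hS hsum, he S' hS' hsum']
    have hne : S.Nonempty := by
      rcases S.eq_empty_or_nonempty with rfl | h
      · simp at hsum; omega
      · exact h
    have hne' : S'.Nonempty := by
      rcases S'.eq_empty_or_nonempty with rfl | h
      · simp at hsum'; omega
      · exact h
    set i := S.max' hne with hi
    set i' := S'.max' hne' with hi'
    have hiS : i ∈ S := S.max'_mem hne
    have hiS' : i' ∈ S' := S'.max'_mem hne'
    have hi1 : 1 ≤ i := hS.1 i hiS
    have hi1' : 1 ≤ i' := hS'.1 i' hiS'
    have hub : ∀ (T : Finset ℕ) (hT : KLegal T) (hneT : T.Nonempty),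
        (∑ x ∈ T, kent x) + 1 ≤ kent (2*((T.max' hneT + 1)/2) + 1) := by
      intro T hT hneT
      apply sum_le_bound _ T hT
      intro x hx
      have := T.le_max' x hx
      omega
    have hbins : (i+1)/2 = (i'+1)/2 := by
      by_contra hne2
      rcases Nat.lt_or_ge ((i+1)/2) ((i'+1)/2) with hlt | hge
      · have h1 := hub S hS hne
        have h2 := sum_lower hS' hne'
        rw [← hi] at h1
        rw [← hi'] at h2
        have : kent (2*((i+1)/2)+1) ≤ kent i' := kent_mono (by omega) (by omega)
        omega
      · have h1 := hub S' hS' hne'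
        have h2 := sum_lower hS hne
        rw [← hi'] at h1
        rw [← hi] at h2
        have : kent (2*((i'+1)/2)+1) ≤ kent i := kent_mono (by omega) (by omega)
        omega
    have hmax : i = i' := by
      by_contra hne2
      rcases Nat.lt_or_ge i i' with hlt | hge
      · have hodd : i = 2*((i+1)/2) - 1 ∧ i' = 2*((i+1)/2) := by omega
        have := max_odd_bound hS hne (b := (i+1)/2) (by omega) (by rw [← hi]; omega)
        have h2 := sum_lower hS' hne'
        rw [← hi'] at h2
        have : kent (2*((i+1)/2)) ≤ kent i' := by
          rw [← hodd.2]
        omega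
      · have hlt : i' < i := by omega
        have hodd : i' = 2*((i+1)/2) - 1 ∧ i = 2*((i+1)/2) := by omega
        have := max_odd_bound hS' hne' (b := (i+1)/2) (by omega) (by rw [← hi']; omega)
        have h2 := sum_lower hS hne
        rw [← hi] at h2
        have : kent (2*((i+1)/2)) ≤ kent i := by
          rw [← hodd.2]
        omega
    -- peel and recurse
    have hkipos := kent_pos i hi1
    have hkipos' := kent_pos i' hi1'
    have hsumS := Finset.sum_erase_add S kent hiS
    have hsumS' := Finset.sum_erase_add S' kent hiS'
    rw [hmax] at hiS hsumS
    have heq : S.erase i' = S'.erase i' := by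
      apply ih (m - kent i') (by omega) _ _ (klegal_erase hS _) (klegal_erase hS' _)
      · omega
      · omega
    have e1 : S = insert i' (S.erase i') := (Finset.insert_erase hiS).symm
    have e2 : S' = insert i' (S'.erase i') := (Finset.insert_erase hiS').symm
    rw [e1, e2, heq]

/-- `decomp m` is the (unique) Kentucky-2 legal set of indices whose corresponding summands
add up to `m`. -/
noncomputable def decomp (m : ℕ) : Finset ℕ :=
  if h : ∃ S : Finset ℕ, KLegal S ∧ ∑ i ∈ S, kent i = m then h.choose else ∅


lemma kent_lower (m : ℕ) : m + 1 ≤ kent (2*m+1) := by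
  induction m with
  | zero => decide
  | succ k ih =>
    have : kent (2*k+1) < kent (2*(k+1)+1) := kent_strict_mono (by omega) (by omega)
    omega

lemma exists_any (m : ℕ) : ∃ S : Finset ℕ, KLegal S ∧ ∑ i ∈ S, kent i = m := by
  obtain ⟨S, h1, _, h3⟩ := exists_rep m m (kent_lower m)
  exact ⟨S, h1, h3⟩

lemma decomp_legal (m : ℕ) : KLegal (decomp m) := by
  rw [decomp, dif_pos (exists_any m)]
  exact (exists_any m).choose_spec.1

lemma decomp_sum (m : ℕ) : ∑ i ∈ decomp m, kent i = m := by
  rw [decomp, dif_pos (exists_any m)]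
  exact (exists_any m).choose_spec.2

lemma decomp_eq {S : Finset ℕ} (h : KLegal S) : decomp (∑ i ∈ S, kent i) = S :=
  unique_rep _ _ _ (decomp_legal _) h (decomp_sum _) rfl

lemma decomp_zero : decomp 0 = ∅ := by
  have := decomp_eq klegal_empty
  simpa using this

/-- `gapsOf S g` is the number of gaps of length `g` in the set `S` of summand indices,
i.e. the number of pairs of consecutive elements of `S` differing by `g`. -/
def gapsOf (S : Finset ℕ) (g : ℕ) : ℕ :=
  (S.filter fun i => 0 < g ∧ i + g ∈ S ∧ ∀ l ∈ S, l ≤ i ∨ i + g ≤ l).card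


lemma gapsOf_zero (S : Finset ℕ) : gapsOf S 0 = 0 := by
  rw [gapsOf]
  simp

lemma gapsOf_empty (g : ℕ) : gapsOf ∅ g = 0 := by
  rw [gapsOf]
  simp

lemma gapsOf_singleton (i g : ℕ) : gapsOf {i} g = 0 := by
  rw [gapsOf, Finset.card_eq_zero, Finset.eq_empty_iff_forall_notMem]
  intro x hx
  simp only [Finset.mem_filter, Finset.mem_singleton] at hx
  omega

lemma gapsOf_insert {S : Finset ℕ} (hne : S.Nonempty) {t g : ℕ} (hg : 0 < g)
    (ht : ∀ j ∈ S, j < t) :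
    gapsOf (insert t S) g = gapsOf S g + (if t = S.max' hne + g then 1 else 0) := by
  set M := S.max' hne with hM
  have hMS : M ∈ S := S.max'_mem hne
  have hMt : M < t := ht M hMS
  have key : (insert t S).filter (fun i => 0 < g ∧ i + g ∈ insert t S ∧
      ∀ l ∈ insert t S, l ≤ i ∨ i + g ≤ l) =
      if t = M + g then insert M (S.filter (fun i => 0 < g ∧ i + g ∈ S ∧
        ∀ l ∈ S, l ≤ i ∨ i + g ≤ l)) else
        S.filter (fun i => 0 < g ∧ i + g ∈ S ∧ ∀ l ∈ S, l ≤ i ∨ i + g ≤ l) := by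
    ext x
    simp only [Finset.mem_filter, Finset.mem_insert]
    constructor
    · rintro ⟨hx1, -, hx2, hx3⟩
      rcases hx1 with rfl | hxS
      · -- x = t : impossible since x + g ∉ insert t S
        exfalso
        rcases hx2 with h | h
        · omega
        · have := ht _ h; omega
      · -- x ∈ S
        have hxM : x ≤ M := S.le_max' x hxS
        rcases hx2 with hxg | hxgS
        · -- x + g = t : forces x = M
          have hxeq : x = M := by
            rcases (hx3 M (Or.inr hMS)) with h | h
            · omega
            · omega
          subst hxeq
          rw [if_pos (by omega)]
          simp
        · -- x + g ∈ S : then x ≠ M and P_S x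
          have hxgM : x + g ≤ M := S.le_max' _ hxgS
          have hPS : x ∈ S ∧ 0 < g ∧ x + g ∈ S ∧ ∀ l ∈ S, l ≤ x ∨ x + g ≤ l :=
            ⟨hxS, hg, hxgS, fun l hl => hx3 l (Or.inr hl)⟩
          split
          · exact Finset.mem_insert_of_mem (Finset.mem_filter.2 hPS)
          · exact Finset.mem_filter.2 hPS
    · intro hx
      have main : ∀ y, y ∈ S → 0 < g → y + g ∈ S → (∀ l ∈ S, l ≤ y ∨ y + g ≤ l) →
          (y = t ∨ y ∈ S) ∧ 0 < g ∧ (y + g = t ∨ y + g ∈ S) ∧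
          ∀ l, (l = t ∨ l ∈ S) → l ≤ y ∨ y + g ≤ l := by
        intro y hy hg' hyg hbet
        refine ⟨Or.inr hy, hg', Or.inr hyg, ?_⟩
        intro l hl
        rcases hl with rfl | hlS
        · right
          have := S.le_max' _ hyg
          omega
        · exact hbet l hlS
      split at hx
      · rcases Finset.mem_insert.1 hx with rfl | hx'
        · -- x = M, new gap
          refine ⟨Or.inr hMS, hg, Or.inl (by omega), ?_⟩
          intro l hl
          rcases hl with rfl | hlS
          · right; omega
          · left; exact S.le_max' l hlS
        · obtain ⟨h1, h2, h3, h4⟩ := Finset.mem_filter.1 hx'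
          exact main x h1 h2 h3 h4
      · obtain ⟨h1, h2, h3, h4⟩ := Finset.mem_filter.1 hx
        exact main x h1 h2 h3 h4
  rw [gapsOf, gapsOf, key]
  split
  · rw [Finset.card_insert_of_notMem]
    intro hMmem
    obtain ⟨-, -, h2, -⟩ := Finset.mem_filter.1 hMmem
    have := S.le_max' _ h2
    omega
  · rfl

lemma sum_gaps {S : Finset ℕ} (hne : S.Nonempty) {K : ℕ} (hK : S.max' hne < K) :
    ∑ g ∈ Finset.range K, gapsOf S g = S.card - 1 := by
  set M := S.max' hne with hM
  have hMS : M ∈ S := S.max'_mem hne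
  have step1 : ∀ g, gapsOf S g =
      ∑ i ∈ S, (if 0 < g ∧ i + g ∈ S ∧ ∀ l ∈ S, l ≤ i ∨ i + g ≤ l then 1 else 0) := by
    intro g
    rw [gapsOf, Finset.card_filter]
  calc ∑ g ∈ Finset.range K, gapsOf S g
      = ∑ g ∈ Finset.range K, ∑ i ∈ S,
          (if 0 < g ∧ i + g ∈ S ∧ ∀ l ∈ S, l ≤ i ∨ i + g ≤ l then 1 else 0) := by
        exact Finset.sum_congr rfl fun g _ => step1 g
    _ = ∑ i ∈ S, ∑ g ∈ Finset.range K,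
          (if 0 < g ∧ i + g ∈ S ∧ ∀ l ∈ S, l ≤ i ∨ i + g ≤ l then 1 else 0) :=
        Finset.sum_comm
    _ = ∑ i ∈ S, (if i ≠ M then 1 else 0) := by
        apply Finset.sum_congr rfl
        intro i hi
        rcases eq_or_ne i M with rfl | hiM
        · rw [if_neg (by simp)]
          apply Finset.sum_eq_zero
          intro g _
          rw [if_neg]
          rintro ⟨hg, hgS, -⟩
          have := S.le_max' _ hgS
          omega
        · rw [if_pos hiM]
          -- i < M ; the unique gap is next - i
          have hiM' : i < M := lt_of_le_of_ne (S.le_max' i hi) hiM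
          have hfne : (S.filter (i < ·)).Nonempty := ⟨M, Finset.mem_filter.2 ⟨hMS, hiM'⟩⟩
          set nx := (S.filter (i < ·)).min' hfne with hnx
          have hnxmem := Finset.mem_filter.1 ((S.filter (i < ·)).min'_mem hfne)
          have hnxS : nx ∈ S := hnxmem.1
          have hnxgt : i < nx := hnxmem.2
          have hnxle : nx ≤ M := S.le_max' _ hnxS
          rw [Finset.sum_eq_single (nx - i)]
          · rw [if_pos]
            refine ⟨by omega, by rw [show i + (nx - i) = nx from by omega]; exact hnxS, ?_⟩
            intro l hl
            rcases Nat.lt_or_ge i l with h | h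
            · right
              have : nx ≤ l := (S.filter (i < ·)).min'_le l (Finset.mem_filter.2 ⟨hl, h⟩)
              omega
            · left; omega
          · intro g hgK hgne
            rw [if_neg]
            rintro ⟨hg, hgS, hbet⟩
            -- then i + g must equal nx
            have h1 : nx ≤ i + g := (S.filter (i < ·)).min'_le _ (Finset.mem_filter.2 ⟨hgS, by omega⟩)
            rcases hbet nx hnxS with h | h
            · omega
            · omega
          · intro hnot
            exfalso
            apply hnot
            rw [Finset.mem_range]
            omega
    _ = S.card - 1 := by
        rw [← Finset.card_filter, Finset.filter_ne' S M, Finset.card_erase_of_mem hMS]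

lemma decomp_bound {r n : ℕ} (hr : r + 1 ≤ kent (2*n+1)) : ∀ i ∈ decomp r, i ≤ 2*n := by
  obtain ⟨S, h1, h2, h3⟩ := exists_rep n r hr
  have : decomp r = S := by rw [← h3, decomp_eq h1]
  rw [this]
  exact h2

lemma decomp_add {b t r : ℕ} (hb : 1 ≤ b) (ht : t = 2*b - 1 ∨ t = 2*b)
    (hr : r + 1 ≤ kent (2*(b-2)+1)) :
    decomp (kent t + r) = insert t (decomp r) := by
  have hbound := decomp_bound hr
  have hleg := decomp_legal r
  have hbins : ∀ j ∈ decomp r, (j+1)/2 + 2 ≤ (t+1)/2 := by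
    intro j hj
    have := hbound j hj
    have := hleg.1 j hj
    omega
  have hlegal : KLegal (insert t (decomp r)) := klegal_insert hleg (by omega) hbins
  have hsum : ∑ i ∈ insert t (decomp r), kent i = kent t + r := by
    rw [Finset.sum_insert (insert_not_mem hbins), decomp_sum]
  rw [← hsum, decomp_eq hlegal]

/-- `i` is the maximum of `S` (and in particular `S` is nonempty). -/
def Pmax (S : Finset ℕ) (i : ℕ) : Prop := i ∈ S ∧ ∀ j ∈ S, j ≤ i

noncomputable def kappa (i : ℕ) : ℕ := kent (2*(((i+1)/2) - 2) + 1)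

lemma kent_ge_self (i : ℕ) : i ≤ kent i := by
  induction i with
  | zero => simp
  | succ k ih =>
    have := kent_lt k
    rcases Nat.eq_zero_or_pos k with rfl | h
    · decide
    · have := kent_lt k h
      omega

lemma count_max {k i : ℕ} (hi1 : 1 ≤ i) (hik : i ≤ 2*k) :
    ((Finset.range (kent (2*k+1))).filter (fun r => Pmax (decomp r) i)).card = kappa i := by
  set b := (i+1)/2 with hb
  have hb1 : 1 ≤ b := by omega
  have hbk : b ≤ k := by omega
  have hit : i = 2*b - 1 ∨ i = 2*b := by omega
  have hfil : (Finset.range (kent (2*k+1))).filter (fun r => Pmax (decomp r) i) =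
      Finset.Ico (kent i) (kent i + kappa i) := by
    ext r
    simp only [Finset.mem_filter, Finset.mem_range, Finset.mem_Ico]
    constructor
    · rintro ⟨hrK, hiD, hmax⟩
      have hsum := decomp_sum r
      have hleg := decomp_legal r
      -- r = kent i + (sum of erase)
      have hsplit := Finset.sum_erase_add (decomp r) kent hiD
      -- bound the rest
      have hrest : (∑ x ∈ (decomp r).erase i, kent x) + 1 ≤ kent (2*(b-2)+1) := by
        apply sum_le_bound (b-2) _ (klegal_erase hleg i)
        intro x hx
        have hx1 := hleg.1 x (Finset.mem_of_mem_erase hx)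
        have hxne := Finset.ne_of_mem_erase hx
        have hxle := hmax x (Finset.mem_of_mem_erase hx)
        have := hleg.2 x (Finset.mem_of_mem_erase hx) i hiD hxne
        rw [abs_pair] at this
        omega
      have hki : kent i ≤ r := by omega
      constructor
      · exact hki
      · rw [kappa, ← hb]
        omega
    · rintro ⟨h1, h2⟩
      have hadd := decomp_add hb1 hit (r := r - kent i) (by rw [kappa, ← hb] at h2; omega)
      rw [show kent i + (r - kent i) = r from by omega] at hadd
      have hbound := decomp_bound (n := b - 2) (r := r - kent i)
        (by rw [kappa, ← hb] at h2; omega)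
      refine ⟨?_, ?_, ?_⟩
      · -- r < kent (2k+1)
        have h3 : kent i + kappa i ≤ kent (2*k+1) := by
          have hle : kent i ≤ kent (2*b) := kent_mono (by omega) (by omega)
          rcases Nat.lt_or_ge b 2 with hb2 | hb2
          · -- b = 1 : kent i ≤ 2, kappa i = 1
            have : b = 1 := by omega
            have hk1 : 1 ≤ k := by omega
            have : kent i ≤ kent 2 := kent_mono (by omega) (by omega)
            have h2' : kent 2 = 2 := rfl
            have hmono : kent 3 ≤ kent (2*k+1) := kent_mono (by omega) (by omega)
            have h3' : kent 3 = 3 := rfl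
            have : kappa i = kent 1 := by
              rw [kappa, ← hb]
              congr 1
              omega
            have h1' : kent 1 = 1 := rfl
            omega
          · have hidA := kent_idA (b-2)
            rw [show 2*(b-2)+5 = 2*b+1 from by omega, show 2*(b-2)+4 = 2*b from by omega]
              at hidA
            have hmono : kent (2*b+1) ≤ kent (2*k+1) := kent_mono (by omega) (by omega)
            have : kappa i = kent (2*(b-2)+1) := by rw [kappa, ← hb]
            omega
        omega
      · rw [hadd]
        exact Finset.mem_insert_self _ _
      · rw [hadd]
        intro j hj
        rcases Finset.mem_insert.1 hj with rfl | hj'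
        · exact le_rfl
        · have := hbound j hj'
          omega
  rw [hfil, Nat.card_Ico]
  omega

lemma decomp_nonempty {m : ℕ} (hm : 1 ≤ m) : (decomp m).Nonempty := by
  rcases (decomp m).eq_empty_or_nonempty with he | h
  · have := decomp_sum m
    rw [he] at this
    simp at this
    omega
  · exact h

lemma count_max_zero {k i : ℕ} (h : i = 0 ∨ 2*k < i) :
    ((Finset.range (kent (2*k+1))).filter (fun r => Pmax (decomp r) i)).card = 0 := by
  rw [Finset.card_eq_zero, Finset.eq_empty_iff_forall_notMem]
  intro r hr
  obtain ⟨hrK, hiD, -⟩ := Finset.mem_filter.1 hr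
  rw [Finset.mem_range] at hrK
  have h1 := (decomp_legal r).1 i hiD
  have h2 := decomp_bound (by omega : r + 1 ≤ kent (2*k+1)) i hiD
  omega

lemma sum_insert_gaps (k t g : ℕ) (hg : 0 < g) (ht : 2*k < t) :
    ∑ r ∈ Finset.range (kent (2*k+1)), gapsOf (insert t (decomp r)) g
    = (∑ r ∈ Finset.range (kent (2*k+1)), gapsOf (decomp r) g)
      + ((Finset.range (kent (2*k+1))).filter (fun r => Pmax (decomp r) (t - g))).card := by
  rw [Finset.card_filter, ← Finset.sum_add_distrib]
  apply Finset.sum_congr rfl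
  intro r hr
  rw [Finset.mem_range] at hr
  rcases Nat.eq_zero_or_pos r with rfl | hrpos
  · rw [decomp_zero]
    have hts : insert t (∅ : Finset ℕ) = {t} := rfl
    rw [hts, gapsOf_empty, gapsOf_singleton, if_neg]
    rintro ⟨hmem, -⟩
    exact absurd hmem (Finset.notMem_empty _)
  · have hne := decomp_nonempty hrpos
    have hbound := decomp_bound (by omega : r + 1 ≤ kent (2*k+1))
    have hlt : ∀ j ∈ decomp r, j < t := fun j hj => by have := hbound j hj; omega
    rw [gapsOf_insert hne hg hlt]
    congr 1
    have hmem := (decomp r).max'_mem hne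
    by_cases hc : t = (decomp r).max' hne + g
    · rw [if_pos hc, if_pos]
      refine ⟨by rw [show t - g = (decomp r).max' hne from by omega]; exact hmem, ?_⟩
      intro j hj
      have := (decomp r).le_max' j hj
      omega
    · rw [if_neg hc, if_neg]
      rintro ⟨hmem2, hmax2⟩
      apply hc
      have h1 : (decomp r).max' hne ≤ t - g := hmax2 _ hmem
      have h2 : t - g ≤ (decomp r).max' hne := (decomp r).le_max' _ hmem2
      have h3 := (decomp_legal r).1 _ hmem2
      omega

lemma interval_split (n : ℕ) (hn : 2 ≤ n) (f : ℕ → ℕ) :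
    ∑ m ∈ Finset.Icc 1 (kent (2*n+1) - 1), f m
    = (∑ m ∈ Finset.Icc 1 (kent (2*(n-1)+1) - 1), f m)
      + (∑ r ∈ Finset.range (kent (2*(n-2)+1)), f (kent (2*n-1) + r))
      + (∑ r ∈ Finset.range (kent (2*(n-2)+1)), f (kent (2*n) + r)) := by
  have h1 : 1 ≤ kent (2*n-1) := kent_pos _ (by omega)
  have h2 : kent (2*n-1) ≤ kent (2*n) := kent_mono (by omega) (by omega)
  have h3 : kent (2*n) ≤ kent (2*n+1) := kent_mono (by omega) (by omega)
  have hidB := kent_idB (n-2)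
  have hidA := kent_idA (n-2)
  rw [show 2*(n-2)+4 = 2*n from by omega, show 2*(n-2)+3 = 2*n-1 from by omega] at hidB
  rw [show 2*(n-2)+5 = 2*n+1 from by omega, show 2*(n-2)+4 = 2*n from by omega] at hidA
  have e1 : Finset.Icc 1 (kent (2*n+1) - 1) = Finset.Ico 1 (kent (2*n+1)) := by
    ext x
    simp only [Finset.mem_Icc, Finset.mem_Ico]
    omega
  have e2 : Finset.Icc 1 (kent (2*(n-1)+1) - 1) = Finset.Ico 1 (kent (2*n-1)) := by
    ext x
    simp only [Finset.mem_Icc, Finset.mem_Ico]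
    rw [show 2*(n-1)+1 = 2*n-1 from by omega]
    omega
  have hmid : ∑ i ∈ Finset.Ico (kent (2*n-1)) (kent (2*n)), f i
      = ∑ r ∈ Finset.range (kent (2*(n-2)+1)), f (kent (2*n-1) + r) := by
    rw [Finset.sum_Ico_eq_sum_range,
      show kent (2*n) - kent (2*n-1) = kent (2*(n-2)+1) from by omega]
  have htop : ∑ i ∈ Finset.Ico (kent (2*n)) (kent (2*n+1)), f i
      = ∑ r ∈ Finset.range (kent (2*(n-2)+1)), f (kent (2*n) + r) := by
    rw [Finset.sum_Ico_eq_sum_range,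
      show kent (2*n+1) - kent (2*n) = kent (2*(n-2)+1) from by omega]
  rw [e1, e2]
  rw [← Finset.sum_Ico_consecutive f (by omega : 1 ≤ kent (2*n-1))
    (by omega : kent (2*n-1) ≤ kent (2*n+1))]
  rw [← Finset.sum_Ico_consecutive f (by omega : kent (2*n-1) ≤ kent (2*n))
    (by omega : kent (2*n) ≤ kent (2*n+1))]
  rw [hmid, htop]
  ring

/-- `N n g` is the total number (with multiplicity) of gaps of length `g` in the Kentucky-2
legal decompositions of the integers `m ∈ {1, …, a (2n+1) - 1}`. -/
noncomputable def N (n g : ℕ) : ℕ :=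
  ∑ m ∈ Finset.Icc 1 (kent (2 * n + 1) - 1), gapsOf (decomp m) g

/-- `T n = Σ_{g≥0} N n g`, the total number of gaps. -/
noncomputable def T (n : ℕ) : ℝ := ∑' g : ℕ, (N n g : ℝ)


lemma N_zero_of_le {n g : ℕ} (h : 2*n ≤ g) : N n g = 0 := by
  rw [N]
  apply Finset.sum_eq_zero
  intro m hm
  rw [Finset.mem_Icc] at hm
  rw [gapsOf, Finset.card_eq_zero, Finset.eq_empty_iff_forall_notMem]
  intro x hx
  obtain ⟨hxm, hg, hxg, -⟩ := Finset.mem_filter.1 hx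
  have hb := decomp_bound (n := n) (by omega) _ hxg
  have h1 := (decomp_legal m).1 x hxm
  omega

lemma range_sum_eq (k g : ℕ) :
    ∑ r ∈ Finset.range (kent (2*k+1)), gapsOf (decomp r) g = N k g := by
  have hpos : 0 < kent (2*k+1) := kent_pos _ (by omega)
  rw [Finset.range_eq_Ico, Finset.sum_eq_sum_Ico_succ_bot hpos, decomp_zero, gapsOf_empty]
  simp only [zero_add]
  rw [N]
  have : Finset.Icc 1 (kent (2*k+1) - 1) = Finset.Ico 1 (kent (2*k+1)) := by
    ext x
    simp only [Finset.mem_Icc, Finset.mem_Ico]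
    omega
  rw [this]

lemma N_rec (n g : ℕ) (hn : 2 ≤ n) (hg : 0 < g) :
    N n g = N (n-1) g + 2 * N (n-2) g
      + ((Finset.range (kent (2*(n-2)+1))).filter (fun r => Pmax (decomp r) (2*n-1-g))).card
      + ((Finset.range (kent (2*(n-2)+1))).filter (fun r => Pmax (decomp r) (2*n-g))).card := by
  have hsplit := interval_split n hn (fun m => gapsOf (decomp m) g)
  rw [show (2:ℕ)*n+1 = 2*n+1 from rfl] at hsplit
  rw [N, hsplit]
  have hmid : ∀ t, 2*n-1 ≤ t → (t = 2*(n:ℕ)-1 ∨ t = 2*n) →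
      ∑ r ∈ Finset.range (kent (2*(n-2)+1)), gapsOf (decomp (kent t + r)) g
      = N (n-2) g
        + ((Finset.range (kent (2*(n-2)+1))).filter (fun r => Pmax (decomp r) (t-g))).card := by
    intro t ht1 ht2
    have step : ∀ r ∈ Finset.range (kent (2*(n-2)+1)),
        gapsOf (decomp (kent t + r)) g = gapsOf (insert t (decomp r)) g := by
      intro r hr
      rw [Finset.mem_range] at hr
      rw [decomp_add (b := n) (by omega) (by omega) (by omega)]
    rw [Finset.sum_congr rfl step, sum_insert_gaps (n-2) t g hg (by omega), range_sum_eq]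
  rw [hmid (2*n-1) le_rfl (Or.inl rfl), hmid (2*n) (by omega) (Or.inr rfl)]
  have hN1 : N (n-1) g = ∑ m ∈ Finset.Icc 1 (kent (2*(n-1)+1) - 1), gapsOf (decomp m) g := rfl
  omega

lemma kappa_eval (d : ℕ) : kappa (2*d+2) = kent (2*(d-1)+1) ∧ kappa (2*d+3) = kent (2*d+1) := by
  constructor
  · rw [kappa]
    congr 2
    omega
  · rw [kappa]
    congr 2
    omega

lemma N_step {j : ℕ} (hj : 2 ≤ j) (d : ℕ) :
    N (j+d+2) (2*j+1) = N (j+d+1) (2*j+1) + 2 * N (j+d) (2*j+1)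
      + kent (2*(d-1)+1) + kent (2*d+1) := by
  have h := N_rec (j+d+2) (2*j+1) (by omega) (by omega)
  rw [show j+d+2-1 = j+d+1 from by omega, show j+d+2-2 = j+d from by omega] at h
  rw [show 2*(j+d+2)-1-(2*j+1) = 2*d+2 from by omega,
    show 2*(j+d+2)-(2*j+1) = 2*d+3 from by omega] at h
  rw [count_max (by omega) (by omega : 2*d+2 ≤ 2*(j+d)),
    count_max (by omega) (by omega : 2*d+3 ≤ 2*(j+d)),
    (kappa_eval d).1, (kappa_eval d).2] at h
  exact h

lemma N_one {j : ℕ} (hj : 2 ≤ j) : N (j+1) (2*j+1) = 1 := by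
  have h := N_rec (j+1) (2*j+1) (by omega) (by omega)
  rw [show j+1-1 = j from by omega, show j+1-2 = j-1 from by omega] at h
  rw [show 2*(j+1)-1-(2*j+1) = 0 from by omega,
    show 2*(j+1)-(2*j+1) = 1 from by omega] at h
  rw [count_max_zero (Or.inl rfl), count_max (le_rfl) (by omega : 1 ≤ 2*(j-1))] at h
  have hz1 : N j (2*j+1) = 0 := N_zero_of_le (by omega)
  have hz2 : N (j-1) (2*j+1) = 0 := N_zero_of_le (by omega)
  have hk : kappa 1 = kent 1 := by rw [kappa]
  have hk1 : kent 1 = 1 := rfl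
  omega

lemma N_closed {j : ℕ} (hj : 2 ≤ j) (d : ℕ) :
    9 * (N (j+d) (2*j+1) : ℤ) = (3*d+1) * 2^d - (-1)^d := by
  induction d using Nat.strong_induction_on with
  | _ d ih =>
    match d with
    | 0 =>
      rw [show j+0 = j from by omega, N_zero_of_le (by omega)]
      norm_num
    | 1 =>
      rw [N_one hj]
      norm_num
    | 2 =>
      have h := N_step hj 0
      have h1 : N (j+1) (2*j+1) = 1 := N_one hj
      have h0 : N j (2*j+1) = 0 := N_zero_of_le (by omega)
      rw [show j+0+2 = j+2 from by omega, show j+0+1 = j+1 from by omega,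
        show j+0 = j from by omega] at h
      rw [h1, h0, show kent 1 = 1 from rfl] at h
      rw [h]
      norm_num
    | (f+3) =>
      have hstep := N_step hj (f+1)
      have ih1 := ih (f+2) (by omega)
      have ih2 := ih (f+1) (by omega)
      have k1 := kent_odd f
      have k2 := kent_odd (f+1)
      rw [show 2*(f+1-1)+1 = 2*f+1 from by omega] at hstep
      rw [show j+(f+1)+2 = j+(f+3) from by omega, show j+(f+1)+1 = j+(f+2) from by omega,
        show j+(f+1) = j+(f+1) from rfl] at hstep
      have hstepZ := congrArg (fun x : ℕ => (x : ℤ)) hstep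
      push_cast at hstepZ
      push_cast at ih1 ih2 k1 k2 ⊢
      linear_combination 9 * hstepZ + ih1 + 2 * ih2 + 3 * k1 + 3 * k2

noncomputable def NN (n : ℕ) : ℕ :=
  ∑ m ∈ Finset.Icc 1 (kent (2*n+1) - 1), ((decomp m).card - 1)

lemma gapsOf_zero_of_large {m g : ℕ} (hm : 1 ≤ m) (hg : m < g) : gapsOf (decomp m) g = 0 := by
  rw [gapsOf, Finset.card_eq_zero, Finset.eq_empty_iff_forall_notMem]
  intro x hx
  obtain ⟨hxm, hgpos, hxg, -⟩ := Finset.mem_filter.1 hx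
  -- x + g ∈ decomp m, so kent (x+g) ≤ m, and x+g ≤ kent (x+g)
  have hsum := decomp_sum m
  have hle : kent (x+g) ≤ m := by
    rw [← hsum]
    exact Finset.single_le_sum (f := fun i => kent i) (fun i _ => Nat.zero_le _) hxg
  have := kent_ge_self (x+g)
  omega

lemma max_le_of_mem {m : ℕ} (hm : 1 ≤ m) (x : ℕ) (hx : x ∈ decomp m) : x ≤ m := by
  have hsum := decomp_sum m
  have hle : kent x ≤ m := by
    rw [← hsum]
    exact Finset.single_le_sum (f := fun i => kent i) (fun i _ => Nat.zero_le _) hx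
  have := kent_ge_self x
  omega

lemma tsum_gaps_eq (m : ℕ) (hm : 1 ≤ m) :
    ∑' g : ℕ, (gapsOf (decomp m) g : ℝ) = (((decomp m).card - 1 : ℕ) : ℝ) := by
  have hzero : ∀ g ∉ Finset.range (m+1), (gapsOf (decomp m) g : ℝ) = 0 := by
    intro g hg
    rw [Finset.mem_range] at hg
    rw [gapsOf_zero_of_large hm (by omega)]
    simp
  rw [tsum_eq_sum hzero, ← Nat.cast_sum]
  congr 1
  have hne := decomp_nonempty hm
  apply sum_gaps hne
  have := max_le_of_mem hm _ ((decomp m).max'_mem hne)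
  omega

lemma T_eq (n : ℕ) : T n = (NN n : ℝ) := by
  rw [T, NN]
  have hN : ∀ g : ℕ, (N n g : ℝ) = ∑ m ∈ Finset.Icc 1 (kent (2*n+1) - 1),
      (gapsOf (decomp m) g : ℝ) := by
    intro g
    rw [N, Nat.cast_sum]
  have hsummable : ∀ m ∈ Finset.Icc 1 (kent (2*n+1) - 1),
      Summable (fun g => (gapsOf (decomp m) g : ℝ)) := by
    intro m hm
    rw [Finset.mem_Icc] at hm
    apply summable_of_ne_finset_zero (s := Finset.range (m+1))
    intro g hg
    rw [Finset.mem_range] at hg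
    rw [gapsOf_zero_of_large (by omega) (by omega)]
    simp
  calc ∑' g : ℕ, (N n g : ℝ)
      = ∑' g : ℕ, ∑ m ∈ Finset.Icc 1 (kent (2*n+1) - 1), (gapsOf (decomp m) g : ℝ) := by
        exact tsum_congr hN
    _ = ∑ m ∈ Finset.Icc 1 (kent (2*n+1) - 1), ∑' g : ℕ, (gapsOf (decomp m) g : ℝ) :=
        Summable.tsum_finsetSum hsummable
    _ = ∑ m ∈ Finset.Icc 1 (kent (2*n+1) - 1), (((decomp m).card - 1 : ℕ) : ℝ) := by
        apply Finset.sum_congr rfl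
        intro m hm
        rw [Finset.mem_Icc] at hm
        exact tsum_gaps_eq m (by omega)
    _ = _ := by rw [Nat.cast_sum]

lemma range_sum_card_eq (k : ℕ) :
    ∑ r ∈ Finset.range (kent (2*k+1)), ((decomp r).card - 1) = NN k := by
  have hpos : 0 < kent (2*k+1) := kent_pos _ (by omega)
  rw [Finset.range_eq_Ico, Finset.sum_eq_sum_Ico_succ_bot hpos, decomp_zero]
  simp only [zero_add, Finset.card_empty]
  rw [NN]
  have : Finset.Icc 1 (kent (2*k+1) - 1) = Finset.Ico 1 (kent (2*k+1)) := by
    ext x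
    simp only [Finset.mem_Icc, Finset.mem_Ico]
    omega
  rw [this]
  omega

lemma sum_card_range (k : ℕ) :
    ∑ r ∈ Finset.range (kent (2*k+1)), (decomp r).card
      = NN k + (kent (2*k+1) - 1) := by
  have h1 : ∑ r ∈ Finset.range (kent (2*k+1)), (decomp r).card
      = ∑ r ∈ Finset.range (kent (2*k+1)), (((decomp r).card - 1) + if 1 ≤ r then 1 else 0) := by
    apply Finset.sum_congr rfl
    intro r _
    rcases Nat.eq_zero_or_pos r with rfl | hr
    · rw [decomp_zero]
      simp
    · have hne := decomp_nonempty hr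
      have hcard := Finset.card_pos.2 hne
      rw [if_pos (show 1 ≤ r from hr)]
      omega
  rw [h1, Finset.sum_add_distrib, range_sum_card_eq]
  congr 1
  rw [← Finset.card_filter]
  have : (Finset.range (kent (2*k+1))).filter (fun x => 1 ≤ x) = Finset.Ico 1 (kent (2*k+1)) := by
    ext x
    simp only [Finset.mem_filter, Finset.mem_range, Finset.mem_Ico]
    omega
  rw [this, Nat.card_Ico]

lemma NN_rec (n : ℕ) (hn : 2 ≤ n) :
    NN n = NN (n-1) + 2 * NN (n-2) + 2 * (kent (2*(n-2)+1) - 1) := by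
  have hsplit := interval_split n hn (fun m => (decomp m).card - 1)
  rw [NN, hsplit]
  have hmid : ∀ t, 2*n-1 ≤ t → (t = 2*(n:ℕ)-1 ∨ t = 2*n) →
      ∑ r ∈ Finset.range (kent (2*(n-2)+1)), ((decomp (kent t + r)).card - 1)
      = NN (n-2) + (kent (2*(n-2)+1) - 1) := by
    intro t ht1 ht2
    have step : ∀ r ∈ Finset.range (kent (2*(n-2)+1)),
        (decomp (kent t + r)).card - 1 = (decomp r).card := by
      intro r hr
      rw [Finset.mem_range] at hr
      rw [decomp_add (b := n) (by omega) (by omega) (by omega)]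
      rw [Finset.card_insert_of_notMem]
      · omega
      · intro hmem
        have := decomp_bound (n := n-2) (by omega) t hmem
        omega
    rw [Finset.sum_congr rfl step, sum_card_range]
  rw [hmid (2*n-1) le_rfl (Or.inl rfl), hmid (2*n) (by omega) (Or.inr rfl)]
  have hNN1 : NN (n-1) = ∑ m ∈ Finset.Icc 1 (kent (2*(n-1)+1) - 1), ((decomp m).card - 1) := rfl
  omega

lemma klegal_singleton {i : ℕ} (hi : 1 ≤ i) : KLegal {i} := by
  constructor
  · intro j hj
    rw [Finset.mem_singleton] at hj
    omega
  · intro a ha b hb hab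
    rw [Finset.mem_singleton] at ha hb
    omega

lemma decomp_one : decomp 1 = {1} := by
  have h := decomp_eq (klegal_singleton (i := 1) le_rfl)
  simpa [show kent 1 = 1 from rfl] using h

lemma decomp_two : decomp 2 = {2} := by
  have h := decomp_eq (klegal_singleton (i := 2) (by omega))
  simpa [show kent 2 = 2 from rfl] using h

lemma NN_zero : NN 0 = 0 := by
  rw [NN]
  have : kent (2*0+1) - 1 = 0 := rfl
  rw [this]
  simp

lemma NN_one : NN 1 = 0 := by
  rw [NN]
  apply Finset.sum_eq_zero
  intro m hm
  rw [Finset.mem_Icc, show kent (2*1+1) - 1 = 2 from rfl] at hm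
  obtain ⟨h1, h2⟩ := hm
  interval_cases m
  · rw [decomp_one]; simp
  · rw [decomp_two]; simp

lemma NN_closed (n : ℕ) :
    27 * (NN n : ℤ) = (12*n - 28)*2^n + (1 - 6*n)*(-1)^n + 27 := by
  induction n using Nat.strong_induction_on with
  | _ n ih =>
    match n with
    | 0 => rw [NN_zero]; norm_num
    | 1 => rw [NN_one]; norm_num
    | (m+2) =>
      have hrec := NN_rec (m+2) (by omega)
      rw [show m+2-1 = m+1 from by omega, show m+2-2 = m from by omega] at hrec
      have ih1 := ih (m+1) (by omega)
      have ih2 := ih m (by omega)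
      have k1 := kent_odd m
      have hpos := kent_pos (2*m+1) (by omega)
      have hrecZ := congrArg (fun x : ℕ => (x : ℤ)) hrec
      push_cast [Nat.cast_sub hpos] at hrecZ
      push_cast at ih1 ih2 k1 ⊢
      linear_combination 27 * hrecZ + ih1 + 2 * ih2 + 18 * k1

open Filter

lemma div_div_aux {a b w : ℝ} (hw : w ≠ 0) : (a/w)/(b/w) = a/b := by
  rcases eq_or_ne b 0 with rfl | hb
  · simp
  · field_simp

/-- For every `j ≥ 2`, the fraction of gaps of length `2j+1` converges to `(3/4) * 2^{-j}`. -/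
theorem kentucky_gaps_odd (j : ℕ) (hj : 2 ≤ j) :
    Tendsto (fun n : ℕ => (N n (2 * j + 1) : ℝ) / T n) atTop (nhds ((3 / 4) * (1 / 2 ^ j))) := by
  have hu : ∀ d : ℕ, (N (d+j) (2*j+1) : ℝ) = ((3*d+1) * 2^d - (-1)^d)/9 := by
    intro d
    have h := N_closed hj d
    rw [add_comm j d] at h
    have hR := congrArg (fun z : ℤ => (z:ℝ)) h
    push_cast at hR
    linarith
  have hv : ∀ d : ℕ, T (d+j)
      = ((12*((d:ℝ)+j) - 28)*2^(d+j) + (1-6*((d:ℝ)+j))*(-1)^(d+j) + 27)/27 := by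
    intro d
    rw [T_eq]
    have h := NN_closed (d+j)
    have hR := congrArg (fun z : ℤ => (z:ℝ)) h
    push_cast at hR
    linarith
  -- the two normalized sequences
  set numF : ℕ → ℝ := fun d =>
    1/3 + (1/(d:ℝ))*(1/9) - ((-1/2:ℝ)^d) * ((1/(d:ℝ)) * (1/9)) with hnumF
  set denF : ℕ → ℝ := fun d =>
    (4/9)*(2:ℝ)^j + (1/(d:ℝ))*((12*(j:ℝ)-28)*2^j/27)
      + ((-1/2:ℝ)^d) * ((-1:ℝ)^j * ((1/(d:ℝ))*(1/27) - 6/27 - (1/(d:ℝ))*(6*(j:ℝ)/27)))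
      + ((1/2:ℝ)^d) * (1/(d:ℝ)) with hdenF
  have h1 : Tendsto (fun d : ℕ => 1/(d:ℝ)) atTop (nhds 0) :=
    tendsto_one_div_atTop_nhds_zero_nat
  have h2 : Tendsto (fun d : ℕ => ((-1/2:ℝ))^d) atTop (nhds 0) := by
    apply tendsto_pow_atTop_nhds_zero_of_abs_lt_one
    rw [abs_div]
    norm_num
  have h3 : Tendsto (fun d : ℕ => ((1/2:ℝ))^d) atTop (nhds 0) := by
    apply tendsto_pow_atTop_nhds_zero_of_abs_lt_one
    rw [abs_div]
    norm_num
  have hnum : Tendsto numF atTop (nhds (1/3)) := by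
    have : Tendsto numF atTop (nhds (1/3 + 0*(1/9) - 0*(0*(1/9)))) := by
      apply Tendsto.sub
      · exact tendsto_const_nhds.add (h1.mul tendsto_const_nhds)
      · exact h2.mul (h1.mul tendsto_const_nhds)
    convert this using 2
    norm_num
  have hden : Tendsto denF atTop (nhds ((4/9)*(2:ℝ)^j)) := by
    have : Tendsto denF atTop (nhds ((4/9)*(2:ℝ)^j + 0*((12*(j:ℝ)-28)*2^j/27)
        + 0 * ((-1:ℝ)^j * (0*(1/27) - 6/27 - 0*(6*(j:ℝ)/27))) + 0 * 0)) := by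
      apply Tendsto.add
      apply Tendsto.add
      apply Tendsto.add
      · exact tendsto_const_nhds
      · exact h1.mul tendsto_const_nhds
      · exact h2.mul (tendsto_const_nhds.mul
          (((h1.mul tendsto_const_nhds).sub tendsto_const_nhds).sub
            (h1.mul tendsto_const_nhds)))
      · exact h3.mul h1
    convert this using 2
    norm_num
  have hlim : Tendsto (fun d : ℕ => numF d / denF d) atTop
      (nhds ((1/3) / ((4/9)*(2:ℝ)^j))) := by
    apply Tendsto.div hnum hden
    positivity
  have hfinal : ((1:ℝ)/3) / ((4/9)*(2:ℝ)^j) = (3/4) * (1/2^j) := by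
    have : (2:ℝ)^j ≠ 0 := by positivity
    field_simp
    ring
  rw [← Filter.tendsto_add_atTop_iff_nat j]
  rw [← hfinal]
  apply Tendsto.congr' _ hlim
  rw [Filter.eventuallyEq_iff_exists_mem]
  refine ⟨{d | 1 ≤ d}, Filter.eventually_atTop.2 ⟨1, fun d hd => hd⟩, ?_⟩
  intro d hd
  simp only [Set.mem_setOf_eq] at hd
  show numF d / denF d = (N (d+j) (2*j+1) : ℝ) / T (d+j)
  have hd0 : (d:ℝ) ≠ 0 := by
    simp only [ne_eq, Nat.cast_eq_zero]
    omega
  have h2d : (2:ℝ)^d ≠ 0 := by positivity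
  have h2j : (2:ℝ)^j ≠ 0 := by positivity
  have hw : (d:ℝ)*2^d ≠ 0 := mul_ne_zero hd0 h2d
  rw [hu d, hv d, ← div_div_aux (a := ((3*(d:ℝ)+1) * 2^d - (-1)^d)/9)
    (b := ((12*((d:ℝ)+j) - 28)*2^(d+j) + (1-6*((d:ℝ)+j))*(-1)^(d+j) + 27)/27) hw]
  have e1 : numF d = (((3*(d:ℝ)+1) * 2^d - (-1)^d)/9) / ((d:ℝ)*2^d) := by
    show (1:ℝ)/3 + (1/(d:ℝ))*(1/9) - ((-1/2:ℝ)^d) * ((1/(d:ℝ)) * (1/9)) = _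
    rw [div_pow]
    field_simp
    ring
  have e2 : denF d = (((12*((d:ℝ)+j) - 28)*2^(d+j) + (1-6*((d:ℝ)+j))*(-1)^(d+j) + 27)/27)
      / ((d:ℝ)*2^d) := by
    show (4:ℝ)/9*(2:ℝ)^j + (1/(d:ℝ))*((12*(j:ℝ)-28)*2^j/27)
      + ((-1/2:ℝ)^d) * ((-1:ℝ)^j * ((1/(d:ℝ))*(1/27) - 6/27 - (1/(d:ℝ))*(6*(j:ℝ)/27)))
      + ((1/2:ℝ)^d) * (1/(d:ℝ)) = _
    rw [div_pow, div_pow, pow_add, pow_add, one_pow]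
    field_simp
    ring
  rw [e1, e2]
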